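/- arXiv:2104.03681 — 4 statements merged into one kernel-verified Lean document; each statement's English description precedes it below -/
import Mathlib

section
/- Arden's rule for trace sets: Let S be a type (of states) and let P, Q be sets of traces over S such that every trace in Q has length at least 2. Then for every set X of traces over S, X satisfies the equation X = P ∪ (Q ∘ X) if and only if X = Q* ∘ P. In particular, Q* ∘ P is the unique solution of the equation X = P ∪ (Q ∘ X). -/
/-- A trace over a type `S` of states is a nonempty finite list of elements of `S`. -/
def Trace (S : Type*) := {l : List S // l ≠ []}

namespace Trace

variable {S : Type*}

/-- The head (first element) of a trace. -/
def head (t : Trace S) : S := t.1.head t.2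

/-- The last element of a trace. -/
def last (t : Trace S) : S := t.1.getLast t.2

/-- Fusion of two traces: `t₁ ∘ t₂ = t₁ ++ tail t₂` (meaningful when `last t₁ = head t₂`). -/
def fuse (t₁ t₂ : Trace S) : Trace S :=
  ⟨t₁.1 ++ t₂.1.tail, by simp [t₁.2]⟩

end Trace

variable {S : Type*}

/-- Fusion product of two sets of traces. -/
def fprod (T₁ T₂ : Set (Trace S)) : Set (Trace S) :=
  {t | ∃ t₁ ∈ T₁, ∃ t₂ ∈ T₂, t₁.last = t₂.head ∧ t = t₁.fuse t₂}

/-- The set `I` of all length-1 traces `[s]`, `s ∈ S`. -/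
def unitTraces (S : Type*) : Set (Trace S) := {t | ∃ s : S, t.1 = [s]}

/-- Powers of a set of traces under the fusion product: `T⁰ = I`, `Tⁿ⁺¹ = T ∘ Tⁿ`. -/
def fpow (T : Set (Trace S)) : ℕ → Set (Trace S)
  | 0 => unitTraces S
  | n + 1 => fprod T (fpow T n)

/-- Star of a set of traces under the fusion product: `T* = ⋃ n, Tⁿ`. -/
def fstar (T : Set (Trace S)) : Set (Trace S) := ⋃ n, fpow T n

/-- `box T V`: states from which every trace of `T` ends in `V`. -/
def box (T : Set (Trace S)) (V : Set S) : Set S :=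
  {s | ∀ t ∈ T, t.head = s → t.last ∈ V}

/-- `diamond T V`: states from which some trace of `T` ends in `V`. -/
def diamond (T : Set (Trace S)) (V : Set S) : Set S :=
  {s | ∃ t ∈ T, t.head = s ∧ t.last ∈ V}

/-- `boxAlways T V`: states from which every trace of `T` lies entirely in `V`. -/
def boxAlways (T : Set (Trace S)) (V : Set S) : Set S :=
  {s | ∀ t ∈ T, t.head = s → ∀ x ∈ t.1, x ∈ V}

/-!
`Q* ∘ P` is a fixed point of `X ↦ P ∪ Q ∘ X` because `Q* = I ∪ Q ∘ Q*` and the fusion product is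
associative, distributes over unions and has `I` as left unit. Conversely, since traces of `Q` have
length at least two, a trace of `Q ∘ X` is strictly longer than the trace of `X` it ends with, so
induction on length shows that every solution is contained in every other one.
-/

namespace Trace

def single (s : S) : Trace S := ⟨[s], List.cons_ne_nil _ _⟩

theorem head_fuse (t₁ t₂ : Trace S) : (t₁.fuse t₂).head = t₁.head := by
  simp [fuse, head, List.head_append_of_ne_nil t₁.2]

theorem last_fuse {t₁ t₂ : Trace S} (h : t₁.last = t₂.head) : (t₁.fuse t₂).last = t₂.last := by
  obtain ⟨_ | ⟨a, l⟩, h₂⟩ := t₂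
  · exact absurd rfl h₂
  · rcases l.eq_nil_or_concat with rfl | ⟨l', b, rfl⟩
    · simpa [fuse, last, head] using h
    · simp [fuse, last]

theorem length_fuse (t₁ t₂ : Trace S) :
    (t₁.fuse t₂).1.length = t₁.1.length + t₂.1.length - 1 := by
  have := List.length_pos_iff.2 t₂.2
  simp [fuse]
  omega

theorem fuse_assoc (t₁ t₂ t₃ : Trace S) : (t₁.fuse t₂).fuse t₃ = t₁.fuse (t₂.fuse t₃) := by
  obtain ⟨_ | ⟨a, l⟩, h₂⟩ := t₂
  · exact absurd rfl h₂
  · exact Subtype.ext (by simp [fuse])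

theorem single_head_fuse (t : Trace S) : (single t.head).fuse t = t := by
  obtain ⟨_ | ⟨a, l⟩, h⟩ := t
  · exact absurd rfl h
  · rfl

end Trace

theorem fprod_assoc (A B C : Set (Trace S)) : fprod (fprod A B) C = fprod A (fprod B C) := by
  ext t
  constructor
  · rintro ⟨_, ⟨a, ha, b, hb, hab, rfl⟩, c, hc, hbc, rfl⟩
    rw [Trace.last_fuse hab] at hbc
    exact ⟨a, ha, b.fuse c, ⟨b, hb, c, hc, hbc, rfl⟩, by rwa [Trace.head_fuse],
      Trace.fuse_assoc a b c⟩
  · rintro ⟨a, ha, _, ⟨b, hb, c, hc, hbc, rfl⟩, habc, rfl⟩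
    rw [Trace.head_fuse] at habc
    exact ⟨a.fuse b, ⟨a, ha, b, hb, habc, rfl⟩, c, hc, by rwa [Trace.last_fuse habc],
      (Trace.fuse_assoc a b c).symm⟩

theorem union_fprod (A B C : Set (Trace S)) : fprod (A ∪ B) C = fprod A C ∪ fprod B C := by
  ext t
  simp only [fprod, Set.mem_union, Set.mem_ofPred_eq]
  constructor
  · rintro ⟨a, ha | ha, rest⟩
    exacts [Or.inl ⟨a, ha, rest⟩, Or.inr ⟨a, ha, rest⟩]
  · rintro (⟨a, ha, rest⟩ | ⟨a, ha, rest⟩)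
    exacts [⟨a, Or.inl ha, rest⟩, ⟨a, Or.inr ha, rest⟩]

theorem unitTraces_fprod (T : Set (Trace S)) : fprod (unitTraces S) T = T := by
  ext t
  constructor
  · rintro ⟨⟨_, _⟩, ⟨s, rfl⟩, t, ht, hlast, rfl⟩
    obtain rfl : s = t.head := hlast
    rwa [← Trace.single, Trace.single_head_fuse]
  · intro ht
    exact ⟨_, ⟨t.head, rfl⟩, t, ht, rfl, (Trace.single_head_fuse t).symm⟩

theorem fstar_eq_unitTraces_union (Q : Set (Trace S)) :
    fstar Q = unitTraces S ∪ fprod Q (fstar Q) := by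
  ext t
  simp only [fstar, Set.mem_union, Set.mem_iUnion]
  constructor
  · rintro ⟨_ | n, ht⟩
    · exact Or.inl ht
    · obtain ⟨q, hq, x, hx, hqx, rfl⟩ := ht
      exact Or.inr ⟨q, hq, x, Set.mem_iUnion.2 ⟨n, hx⟩, hqx, rfl⟩
  · rintro (ht | ⟨q, hq, x, hx, hqx, rfl⟩)
    · exact ⟨0, ht⟩
    · obtain ⟨n, hn⟩ := Set.mem_iUnion.1 hx
      exact ⟨n + 1, q, hq, x, hn, hqx, rfl⟩

theorem fprod_fstar_eq_union (P Q : Set (Trace S)) :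
    fprod (fstar Q) P = P ∪ fprod Q (fprod (fstar Q) P) := by
  conv_lhs => rw [fstar_eq_unitTraces_union Q, union_fprod, unitTraces_fprod, fprod_assoc]

theorem subset_of_subset_union_fprod {P Q X Y : Set (Trace S)} (hQ : ∀ t ∈ Q, 2 ≤ t.1.length)
    (hX : X ⊆ P ∪ fprod Q X) (hY : P ∪ fprod Q Y ⊆ Y) : X ⊆ Y := by
  intro t
  induction h : t.1.length using Nat.strong_induction_on generalizing t with
  | _ n ih =>
    intro ht
    rcases hX ht with hP | ⟨q, hq, x, hx, hqx, rfl⟩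
    · exact hY (Or.inl hP)
    · have hx_lt : x.1.length < n := by
        have := hQ q hq
        rw [← h, Trace.length_fuse]
        omega
      exact hY (Or.inr ⟨q, hq, x, ih _ hx_lt rfl hx, hqx, rfl⟩)

/-- Arden's rule for trace sets. -/
theorem arden_traces {S : Type*} (P Q : Set (Trace S))
    (hQ : ∀ t ∈ Q, 2 ≤ t.1.length) :
    ∀ X : Set (Trace S), X = P ∪ fprod Q X ↔ X = fprod (fstar Q) P := by
  intro X
  have hfix := fprod_fstar_eq_union P Q
  constructor
  · intro hX
    exact (subset_of_subset_union_fprod hQ hX.le hfix.ge).antisymm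
      (subset_of_subset_union_fprod hQ hfix.le hX.ge)
  · rintro rfl
    exact hfix
end

section
/- Arden's rule for formal languages: Let α be an alphabet (any type) and let L, M, K be languages over α (sets of words, i.e., lists over α). If the empty word does not belong to M, then K satisfies the equation K = L + M * K (where + is union of languages and * is language concatenation) if and only if K = M∗ * L, where M∗ is the Kleene star of M. In particular, M∗ * L is the unique solution of the equation K = L + M * K. -/
/-- Arden's rule for formal languages: if the empty word is not in `M`,
then `K = L + M * K` iff `K = M∗ * L` (so `M∗ * L` is the unique solution). -/
theorem arden_language {α : Type*} (L M K : Language α) (h : [] ∉ M) :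
    K = L + M * K ↔ K = KStar.kstar M * L := by
  rw [add_comm]
  exact Language.self_eq_mul_add_iff h
end

section
/- Semantic soundness of the convergence rule for star: Let S be a type (of states), T a set of traces over S, and φ : ℕ → Set S a family of sets of states. If for every natural number n, φ(n+1) ⊆ diamond(T, φ(n)), then for every natural number n, φ(n) ⊆ diamond(T*, φ(0)); that is, if every state satisfying φ(n+1) has a trace in T starting there and ending in a state satisfying φ(n), then every state satisfying φ(n) for some n has a trace in T* starting there and ending in a state satisfying φ(0). -/
variable {S : Type*}

theorem diamond_mono {T₁ T₂ : Set (Trace S)} {V₁ V₂ : Set S} (hT : T₁ ⊆ T₂) (hV : V₁ ⊆ V₂) :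
    diamond T₁ V₁ ⊆ diamond T₂ V₂ := fun _ ⟨t, ht, hhead, hlast⟩ ↦ ⟨t, hT ht, hhead, hV hlast⟩

theorem subset_diamond_unitTraces (V : Set S) : V ⊆ diamond (unitTraces S) V :=
  fun s hs ↦ ⟨⟨[s], List.cons_ne_nil s []⟩, ⟨s, rfl⟩, rfl, hs⟩

theorem diamond_diamond_subset_diamond_fprod (T₁ T₂ : Set (Trace S)) (V : Set S) :
    diamond T₁ (diamond T₂ V) ⊆ diamond (fprod T₁ T₂) V := by
  rintro s ⟨t₁, ht₁, rfl, t₂, ht₂, hjoin, hlast⟩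
  exact ⟨t₁.fuse t₂, ⟨t₁, ht₁, t₂, ht₂, hjoin.symm, rfl⟩, Trace.head_fuse t₁ t₂,
    Trace.last_fuse hjoin.symm ▸ hlast⟩

theorem subset_diamond_fpow {T : Set (Trace S)} {φ : ℕ → Set S}
    (h : ∀ n, φ (n + 1) ⊆ diamond T (φ n)) (n : ℕ) : φ n ⊆ diamond (fpow T n) (φ 0) := by
  induction n with
  | zero => exact subset_diamond_unitTraces (φ 0)
  | succ n ih =>
    exact (h n).trans <| (diamond_mono subset_rfl ih).trans <|
      diamond_diamond_subset_diamond_fprod T (fpow T n) (φ 0)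

/-- semantic soundness of the convergence rule for star. -/
theorem diamond_star_convergence {S : Type*} (T : Set (Trace S)) (φ : ℕ → Set S)
    (h : ∀ n : ℕ, φ (n + 1) ⊆ diamond T (φ n)) :
    ∀ n : ℕ, φ n ⊆ diamond (fstar T) (φ 0) := fun n ↦
  (subset_diamond_fpow h n).trans (diamond_mono (Set.subset_iUnion (fpow T) n) subset_rfl)
end

section
/- Semantic soundness of the assignment rule: Let S be a type (of states) and f : S → S a function (interpreting an assignment). Let T_f = { [s, f s] | s ∈ S } be the set of length-2 traces realizing f. Then for every set T of traces over S and every set V of states, box(T_f ∘ T, V) = { s ∈ S | f s ∈ box(T, V) }. -/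
variable {S : Type*}

theorem box_fprod (T₁ T₂ : Set (Trace S)) (V : Set S) :
    box (fprod T₁ T₂) V = box T₁ (box T₂ V) := by
  ext s
  constructor
  · intro h t₁ ht₁ hs₁ t₂ ht₂ hlast
    rw [← Trace.last_fuse hlast.symm]
    exact h _ ⟨t₁, ht₁, t₂, ht₂, hlast.symm, rfl⟩ (by rw [Trace.head_fuse, hs₁])
  · rintro h _ ⟨t₁, ht₁, t₂, ht₂, hlast, rfl⟩ hs
    rw [Trace.last_fuse hlast]
    exact h t₁ ht₁ (by rwa [Trace.head_fuse] at hs) t₂ ht₂ hlast.symm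

theorem box_graphTraces (f : S → S) (W : Set S) :
    box {t : Trace S | ∃ s : S, t.1 = [s, f s]} W = f ⁻¹' W := by
  ext s
  constructor
  · intro h
    exact h ⟨[s, f s], List.cons_ne_nil _ _⟩ ⟨s, rfl⟩ rfl
  · rintro hs ⟨_, _⟩ ⟨s', rfl⟩ rfl
    exact hs

/-- semantic soundness of the assignment rule. -/
theorem box_assign {S : Type*} (f : S → S) (T : Set (Trace S)) (V : Set S) :
    box (fprod {t : Trace S | ∃ s : S, t.1 = [s, f s]} T) V
      = {s : S | f s ∈ box T V} := by
  rw [box_fprod, box_graphTraces]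
  rfl
end
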